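/- arXiv:2505.18478 — 2 statements merged into one kernel-verified Lean document; each statement's English description precedes it below -/
import Mathlib

section
/- Noise-resilience theorem for smoothed classifiers with independent per-coordinate Gaussian noise: Let f : ℝᵈ → Γ be a measurable classifier into a finite label set Γ, σ ∈ ℝᵈ with σᵢ > 0, Σ = diag(σ²), and ε ~ N(0,Σ). Suppose for a point θ ∈ ℝᵈ and class c_a, ℙ(f(θ+ε) = c_a) ≥ p_A and max_{c ≠ c_a} ℙ(f(θ+ε) = c) ≤ p_B with p_A ≥ p_B, p_A, p_B ∈ (0,1). Then for every δ ∈ ℝᵈ with ‖δ ⊘ σ‖₂ < ½(Φ⁻¹(p_A) - Φ⁻¹(p_B)), we have ℙ(f(θ+δ+ε) = c_a) > ℙ(f(θ+δ+ε) = c) for all c ≠ c_a. -/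
open MeasureTheory ProbabilityTheory

noncomputable def Phi (x : ℝ) : ℝ := ((gaussianReal 0 1) (Set.Iic x)).toReal

noncomputable def PhiInv : ℝ → ℝ := Function.invFun Phi

noncomputable def gaussPi (d : ℕ) (m s : Fin d → ℝ) : Measure (Fin d → ℝ) :=
  Measure.pi fun i => gaussianReal (m i) ((s i ^ 2).toNNReal)

/-!
Write `s = ‖δ ⊘ σ‖₂` and `L x = ⟨δ ⊘ σ², x⟩ / s`. Shifting the noise by `δ` turns `gaussPi d 0 σ`
into `gaussPi d δ σ`, whose density with respect to `gaussPi d 0 σ` is `exp (s L - s² / 2)`, an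
increasing function of `L`; and `L` is `N(0,1)` under the first law and `N(s,1)` under the second.
By the Neyman–Pearson lemma, among the sets of a given mass under `gaussPi d 0 σ` the sublevel sets
of `L` have the least mass under `gaussPi d δ σ`. Hence a class of probability `≥ pA` keeps
probability `≥ Phi (PhiInv pA - s)`, and (passing to complements) a class of probability `≤ pB`
gets at most `Phi (PhiInv pB + s)`. The bound on `δ` says exactly that
`PhiInv pB + s < PhiInv pA - s`.
-/

open Set Real
open scoped NNReal ENNReal

theorem ProbabilityTheory.continuous_cdf (μ : Measure ℝ) [IsProbabilityMeasure μ]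
    [NullSingletonClass μ] : Continuous (cdf μ) := by
  refine continuous_iff_continuousAt.2 fun x ↦ continuousAt_iff_continuous_left_right.2
    ⟨?_, (cdf μ).right_continuous x⟩
  rw [← continuousWithinAt_Iio_iff_Iic, (cdf μ).mono.continuousWithinAt_Iio_iff_leftLim_eq]
  have h := (cdf μ).measure_singleton x
  rw [measure_cdf, measure_singleton, eq_comm, ENNReal.ofReal_eq_zero] at h
  exact le_antisymm ((cdf μ).mono.leftLim_le le_rfl) (by linarith)

theorem Phi_eq_cdf : Phi = cdf (gaussianReal 0 1) := by
  ext x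
  rw [cdf_eq_real]
  rfl

theorem measureReal_gaussianReal_Iic (m x : ℝ) :
    (gaussianReal m 1).real (Iic x) = Phi (x - m) := by
  rw [← zero_add m, ← gaussianReal_map_add_const, map_measureReal_apply (by fun_prop)
    measurableSet_Iic, zero_add, Phi, ← measureReal_def]
  congr 1
  ext y
  simp [le_sub_iff_add_le]

theorem Phi_strictMono : StrictMono Phi := by
  intro x y hxy
  have hpos : 0 < (gaussianReal 0 1) (Ioc x y) := by
    refine pos_iff_ne_zero.2 fun h ↦ ?_
    have := gaussianReal_absolutelyContinuous' 0 one_ne_zero h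
    rw [Real.volume_Ioc, ENNReal.ofReal_eq_zero] at this
    linarith
  rw [Phi_eq_cdf, cdf_eq_real, cdf_eq_real, ← Iic_union_Ioc_eq_Iic hxy.le,
    measureReal_union (Iic_disjoint_Ioc le_rfl) measurableSet_Ioc]
  have := ENNReal.toReal_pos hpos.ne' (measure_ne_top _ _)
  rw [← measureReal_def] at this
  linarith

theorem Phi_neg (x : ℝ) : Phi (-x) = 1 - Phi x := by
  have := nullSingletonClass_gaussianReal (μ := 0) one_ne_zero
  have hsymm : (gaussianReal 0 1).map (fun y ↦ -y) = gaussianReal 0 1 := by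
    rw [gaussianReal_map_neg, neg_zero]
  have hpre : (fun y : ℝ ↦ -y) ⁻¹' Iic (-x) = (Iio x)ᶜ := by ext; simp
  rw [Phi, Phi, ← measureReal_def, ← measureReal_def, ← hsymm,
    map_measureReal_apply (by fun_prop) measurableSet_Iic, hsymm, hpre,
    probReal_compl_eq_one_sub measurableSet_Iio, measureReal_congr Iio_ae_eq_Iic]

theorem Phi_PhiInv {p : ℝ} (hp : p ∈ Ioo (0 : ℝ) 1) : Phi (PhiInv p) = p := by
  refine Function.invFun_eq ?_
  have := nullSingletonClass_gaussianReal (μ := 0) one_ne_zero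
  rw [Phi_eq_cdf]
  obtain ⟨a, ha⟩ := ((tendsto_cdf_atBot _).eventually (eventually_lt_nhds hp.1)).exists
  obtain ⟨b, hb⟩ := ((tendsto_cdf_atTop _).eventually (eventually_gt_nhds hp.2)).exists
  exact mem_range_of_exists_le_of_exists_ge (continuous_cdf _) ⟨a, ha.le⟩ ⟨b, hb.le⟩

theorem neyman_pearson {X : Type*} [MeasurableSpace X] {μ : Measure X} [IsFiniteMeasure μ]
    {L : X → ℝ} (hL : Measurable L) {φ : ℝ → ℝ≥0∞} (hφ : Monotone φ) {t : ℝ} {A : Set X}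
    (hA : MeasurableSet A) (h : μ {x | L x ≤ t} ≤ μ A) :
    μ.withDensity (φ ∘ L) {x | L x ≤ t} ≤ μ.withDensity (φ ∘ L) A := by
  set H := {x | L x ≤ t}
  have hH : MeasurableSet H := measurableSet_le hL measurable_const
  have hdiff : μ (H \ A) ≤ μ (A \ H) := by
    rw [← measure_inter_add_sdiff H hA, ← measure_inter_add_sdiff A hH, inter_comm] at h
    exact (ENNReal.add_le_add_iff_left (measure_ne_top μ _)).1 h
  set ν := μ.withDensity (φ ∘ L)
  have hHA : ν (H \ A) ≤ φ t * μ (H \ A) := by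
    rw [withDensity_apply _ (hH.diff hA), ← setLIntegral_const]
    exact setLIntegral_mono' (hH.diff hA) fun x hx ↦ hφ hx.1
  have hAH : φ t * μ (A \ H) ≤ ν (A \ H) := by
    rw [withDensity_apply _ (hA.diff hH), ← setLIntegral_const]
    exact setLIntegral_mono' (hA.diff hH) fun x hx ↦ hφ (not_le.1 hx.2).le
  calc ν H = ν (H ∩ A) + ν (H \ A) := (measure_inter_add_sdiff H hA).symm
    _ ≤ ν (A ∩ H) + ν (A \ H) := by
      rw [inter_comm]
      exact add_le_add le_rfl (hHA.trans ((mul_le_mul_right hdiff _).trans hAH))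
    _ = ν A := measure_inter_add_sdiff A hH

section GaussianTest

variable {X : Type*} [MeasurableSpace X] {μ ν : Measure X} {L : X → ℝ} {φ : ℝ → ℝ≥0∞} {s : ℝ} {A : Set X}

theorem Phi_sub_le_measureReal_of_Phi_le [IsFiniteMeasure μ] [IsFiniteMeasure ν] (hL : Measurable L)
    (hφ : Monotone φ) (hν : ν = μ.withDensity (φ ∘ L)) (hμL : μ.map L = gaussianReal 0 1)
    (hνL : ν.map L = gaussianReal s 1) (hA : MeasurableSet A) {t : ℝ}
    (h : Phi t ≤ μ.real A) : Phi (t - s) ≤ ν.real A := by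
  have hlevel {ρ : Measure X} {m : ℝ} (hρ : ρ.map L = gaussianReal m 1) :
      ρ.real {x | L x ≤ t} = Phi (t - m) := by
    rw [← measureReal_gaussianReal_Iic, ← hρ, map_measureReal_apply hL measurableSet_Iic]
    rfl
  have hμ : μ {x | L x ≤ t} ≤ μ A := by
    rw [← ENNReal.toReal_le_toReal (measure_ne_top _ _) (measure_ne_top _ _)]
    simpa only [← measureReal_def, hlevel hμL, sub_zero] using h
  rw [← hlevel hνL, measureReal_def, measureReal_def,
    ENNReal.toReal_le_toReal (measure_ne_top _ _) (measure_ne_top _ _), hν]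
  exact neyman_pearson hL hφ hA hμ

theorem measureReal_le_Phi_add_of_le_Phi [IsProbabilityMeasure μ] [IsProbabilityMeasure ν] (hL : Measurable L)
    (hφ : Monotone φ) (hν : ν = μ.withDensity (φ ∘ L)) (hμL : μ.map L = gaussianReal 0 1)
    (hνL : ν.map L = gaussianReal s 1) (hA : MeasurableSet A) {t : ℝ}
    (h : μ.real A ≤ Phi t) : ν.real A ≤ Phi (t + s) := by
  have hc := Phi_sub_le_measureReal_of_Phi_le hL hφ hν hμL hνL hA.compl (t := -t)
    (by rw [Phi_neg, probReal_compl_eq_one_sub hA]; linarith)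
  rw [probReal_compl_eq_one_sub hA, ← neg_add', Phi_neg] at hc
  linarith

end GaussianTest

theorem pi_gaussianReal_map_sum_mul {ι : Type*} [Fintype ι] (m : ι → ℝ) (v : ι → ℝ≥0)
    (a : ι → ℝ) :
    (Measure.pi fun i ↦ gaussianReal (m i) (v i)).map (fun x ↦ ∑ i, a i * x i) =
      gaussianReal (∑ i, a i * m i) (∑ i, (a i ^ 2).toNNReal * v i) := by
  set μ := Measure.pi fun i ↦ gaussianReal (m i) (v i)
  have hindep : iIndepFun (fun i (x : ι → ℝ) ↦ a i * x i) μ :=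
    iIndepFun_pi (X := fun i (y : ℝ) ↦ a i * y) fun i ↦ by fun_prop
  have hcoord (i : ι) : μ.map (fun x ↦ a i * x i) =
      gaussianReal (a i * m i) ((a i ^ 2).toNNReal * v i) := by
    have := (measurePreserving_eval (fun i ↦ gaussianReal (m i) (v i)) i).map_eq
    rw [show (fun x : ι → ℝ ↦ a i * x i) = (a i * ·) ∘ Function.eval i from rfl,
      ← Measure.map_map (measurable_const_mul (a i)) (measurable_pi_apply i), this,
      gaussianReal_map_const_mul, Real.toNNReal_of_nonneg (sq_nonneg _)]
  refine Measure.ext_of_charFun (funext fun t ↦ ?_)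
  rw [hindep.charFun_map_fun_sum_eq_prod fun i ↦ (by fun_prop : Measurable _).aemeasurable]
  simp_rw [Finset.prod_apply, hcoord, charFun_gaussianReal]
  rw [← Complex.exp_sum]
  congr 1
  push_cast
  rw [Finset.sum_sub_distrib, Finset.mul_sum, Finset.sum_mul, Finset.sum_mul, Finset.sum_div]

theorem MeasureTheory.Measure.pi_withDensity {ι : Type*} [Fintype ι] {α : ι → Type*}
    [∀ i, MeasurableSpace (α i)] (μ : ∀ i, Measure (α i)) [∀ i, IsProbabilityMeasure (μ i)]
    {g : ∀ i, α i → ℝ≥0∞} (hg : ∀ i, Measurable (g i))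
    [∀ i, SigmaFinite ((μ i).withDensity (g i))] :
    (Measure.pi μ).withDensity (fun x ↦ ∏ i, g i (x i)) =
      Measure.pi fun i ↦ (μ i).withDensity (g i) := by
  refine (Measure.pi_eq fun s hs ↦ ?_).symm
  have hbox : (univ.pi s).indicator (fun x ↦ ∏ i, g i (x i)) =
      fun x ↦ ∏ i, (s i).indicator (g i) (x i) := by
    ext x
    by_cases hx : x ∈ univ.pi s
    · rw [indicator_of_mem hx]
      exact Finset.prod_congr rfl fun i _ ↦ (indicator_of_mem (hx i (mem_univ i)) _).symm
    · obtain ⟨i, -, hi⟩ := not_forall₂.1 hx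
      rw [indicator_of_notMem hx, eq_comm]
      exact Finset.prod_eq_zero (Finset.mem_univ i) (indicator_of_notMem hi _)
  have hindep : iIndepFun (fun i (x : ∀ i, α i) ↦ (s i).indicator (g i) (x i)) (Measure.pi μ) :=
    iIndepFun_pi fun i ↦ ((hg i).indicator (hs i)).aemeasurable
  rw [withDensity_apply _ (.univ_pi hs), ← lintegral_indicator (.univ_pi hs), hbox,
    lintegral_prod_eq_prod_lintegral_of_indepFun _ _ hindep
      fun i ↦ ((hg i).indicator (hs i)).comp (measurable_pi_apply i)]
  refine Finset.prod_congr rfl fun i _ ↦ ?_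
  rw [withDensity_apply _ (hs i), ← lintegral_indicator (hs i),
    ← (measurePreserving_eval μ i).lintegral_comp ((hg i).indicator (hs i))]

theorem gaussianReal_withDensity_exp (a : ℝ) {v : ℝ≥0} (hv : v ≠ 0) :
    (gaussianReal 0 v).withDensity (fun x ↦ ENNReal.ofReal (exp (a * x - a ^ 2 * v / 2))) =
      gaussianReal (a * v) v := by
  rw [gaussianReal_of_var_ne_zero _ hv, gaussianReal_of_var_ne_zero _ hv,
    ← withDensity_mul _ (measurable_gaussianPDF 0 v) (by fun_prop)]
  congr 1
  funext x
  simp only [Pi.mul_apply, gaussianPDF]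
  rw [← ENNReal.ofReal_mul (gaussianPDFReal_nonneg _ _ _), gaussianPDFReal, gaussianPDFReal,
    mul_assoc, ← Real.exp_add]
  have hv' : (0 : ℝ) < v := NNReal.coe_pos.2 (pos_iff_ne_zero.2 hv)
  congr 3
  field_simp
  ring

theorem pi_gaussianReal_withDensity_exp {ι : Type*} [Fintype ι] (a : ι → ℝ) {v : ι → ℝ≥0}
    (hv : ∀ i, v i ≠ 0) :
    (Measure.pi fun i ↦ gaussianReal 0 (v i)).withDensity
        (fun x ↦ ENNReal.ofReal (exp (∑ i, (a i * x i - a i ^ 2 * v i / 2)))) =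
      Measure.pi fun i ↦ gaussianReal (a i * v i) (v i) := by
  have (i : ι) : SigmaFinite ((gaussianReal 0 (v i)).withDensity
      fun x ↦ ENNReal.ofReal (exp (a i * x - a i ^ 2 * v i / 2))) := by
    rw [gaussianReal_withDensity_exp _ (hv i)]
    infer_instance
  simp_rw [Real.exp_sum, ENNReal.ofReal_prod_of_nonneg fun i _ ↦ (exp_pos _).le]
  rw [Measure.pi_withDensity (g := fun i x ↦ ENNReal.ofReal (exp (a i * x - a i ^ 2 * v i / 2)))
    _ fun i ↦ by fun_prop]
  simp_rw [gaussianReal_withDensity_exp _ (hv _)]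

theorem pi_gaussianReal_map_add {ι : Type*} [Fintype ι] (m δ : ι → ℝ) (v : ι → ℝ≥0) :
    (Measure.pi fun i ↦ gaussianReal (m i) (v i)).map (· + δ) =
      Measure.pi fun i ↦ gaussianReal (m i + δ i) (v i) := by
  rw [show (· + δ) = fun (x : ι → ℝ) i ↦ x i + δ i from rfl,
    Measure.pi_map_pi (f := fun i y ↦ y + δ i) fun i ↦ by fun_prop]
  simp_rw [gaussianReal_map_add_const]

section GaussPi

variable {d : ℕ} {σ : Fin d → ℝ}

instance (m : Fin d → ℝ) : IsProbabilityMeasure (gaussPi d m σ) := by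
  unfold gaussPi
  infer_instance

theorem gaussPi_map_add (m δ : Fin d → ℝ) : (gaussPi d m σ).map (· + δ) = gaussPi d (m + δ) σ :=
  pi_gaussianReal_map_add m δ _

noncomputable def shiftStat (σ δ : Fin d → ℝ) (s : ℝ) (x : Fin d → ℝ) : ℝ :=
  ∑ i, δ i / (σ i ^ 2 * s) * x i

variable {δ : Fin d → ℝ} {s : ℝ}

theorem shiftStat_self (hs : s ^ 2 = ∑ i, (δ i / σ i) ^ 2) (hs0 : s ≠ 0) :
    shiftStat σ δ s δ = s := by
  have (i : Fin d) : δ i / (σ i ^ 2 * s) * δ i = (δ i / σ i) ^ 2 / s := by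
    field_simp
  simp_rw [shiftStat, this, ← Finset.sum_div, ← hs]
  field_simp

theorem gaussPi_map_shiftStat (hs : s ^ 2 = ∑ i, (δ i / σ i) ^ 2) (hs0 : s ≠ 0)
    (m : Fin d → ℝ) :
    (gaussPi d m σ).map (shiftStat σ δ s) = gaussianReal (shiftStat σ δ s m) 1 := by
  unfold gaussPi shiftStat
  rw [pi_gaussianReal_map_sum_mul]
  congr
  have (i : Fin d) : ((δ i / (σ i ^ 2 * s)) ^ 2).toNNReal * (σ i ^ 2).toNNReal =
      ((δ i / σ i) ^ 2 / s ^ 2).toNNReal := by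
    rw [← Real.toNNReal_mul (sq_nonneg _)]
    field_simp
  simp_rw [this, ← Real.toNNReal_sum_of_nonneg fun i _ ↦ div_nonneg (sq_nonneg _) (sq_nonneg _),
    ← Finset.sum_div, ← hs, div_self (pow_ne_zero 2 hs0), Real.toNNReal_one]

theorem gaussPi_eq_withDensity_shiftStat (hσ : ∀ i, 0 < σ i)
    (hs : s ^ 2 = ∑ i, (δ i / σ i) ^ 2) (hs0 : s ≠ 0) :
    gaussPi d δ σ = (gaussPi d 0 σ).withDensity
      ((fun y ↦ ENNReal.ofReal (exp (s * y - s ^ 2 / 2))) ∘ shiftStat σ δ s) := by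
  have hv (i : Fin d) : (σ i ^ 2).toNNReal ≠ 0 := by simpa using (hσ i).ne'
  have htilt := pi_gaussianReal_withDensity_exp (fun i ↦ δ i / σ i ^ 2) hv
  have hmean (i : Fin d) : δ i / σ i ^ 2 * ((σ i ^ 2).toNNReal : ℝ) = δ i := by
    rw [Real.coe_toNNReal _ (sq_nonneg _)]
    field_simp [(hσ i).ne']
  have hdens (x : Fin d → ℝ) :
      ∑ i, (δ i / σ i ^ 2 * x i - (δ i / σ i ^ 2) ^ 2 * ((σ i ^ 2).toNNReal : ℝ) / 2) =
        s * shiftStat σ δ s x - s ^ 2 / 2 := by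
    rw [Finset.sum_sub_distrib, shiftStat, Finset.mul_sum, hs, Finset.sum_div]
    congr 1 <;> refine Finset.sum_congr rfl fun i _ ↦ ?_
    · field_simp [(hσ i).ne']
    · rw [Real.coe_toNNReal _ (sq_nonneg _)]
      field_simp
  simp_rw [hdens, hmean] at htilt
  exact htilt.symm

theorem gaussPi_shift_Phi_bounds (hσ : ∀ i, 0 < σ i) (δ : Fin d → ℝ) {A : Set (Fin d → ℝ)}
    (hA : MeasurableSet A) (t : ℝ) :
    (Phi t ≤ (gaussPi d 0 σ).real A →
      Phi (t - √(∑ i, (δ i / σ i) ^ 2)) ≤ (gaussPi d δ σ).real A) ∧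
    ((gaussPi d 0 σ).real A ≤ Phi t →
      (gaussPi d δ σ).real A ≤ Phi (t + √(∑ i, (δ i / σ i) ^ 2))) := by
  rcases (sqrt_nonneg (∑ i, (δ i / σ i) ^ 2)).eq_or_lt with hs0 | hs0 <;>
    set s := √(∑ i, (δ i / σ i) ^ 2)
  · rw [← hs0, sub_zero, add_zero]
    obtain rfl : δ = 0 := by
      rw [eq_comm, sqrt_eq_zero (Finset.sum_nonneg fun i _ ↦ sq_nonneg _),
        Finset.sum_eq_zero_iff_of_nonneg fun i _ ↦ sq_nonneg _] at hs0
      ext i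
      simpa [(hσ i).ne'] using hs0 i (Finset.mem_univ i)
    exact ⟨id, id⟩
  have hs : s ^ 2 = ∑ i, (δ i / σ i) ^ 2 := sq_sqrt (Finset.sum_nonneg fun i _ ↦ sq_nonneg _)
  have hφ : Monotone fun y ↦ ENNReal.ofReal (exp (s * y - s ^ 2 / 2)) := fun y z hyz ↦
    ENNReal.ofReal_le_ofReal (exp_le_exp.2 (by gcongr))
  have hL : Measurable (shiftStat σ δ s) := by unfold shiftStat; fun_prop
  have hν := gaussPi_eq_withDensity_shiftStat hσ hs hs0.ne'
  have hμL := gaussPi_map_shiftStat hs hs0.ne' 0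
  have hνL := gaussPi_map_shiftStat hs hs0.ne' δ
  rw [shiftStat_self hs hs0.ne'] at hνL
  simp only [shiftStat, Pi.zero_apply, mul_zero, Finset.sum_const_zero] at hμL
  exact ⟨Phi_sub_le_measureReal_of_Phi_le hL hφ hν hμL hνL hA,
    measureReal_le_Phi_add_of_le_Phi hL hφ hν hμL hνL hA⟩

end GaussPi

theorem noise_resilience_general {Γ : Type*} [MeasurableSpace Γ] [MeasurableSingletonClass Γ]
    (d : ℕ) (f : (Fin d → ℝ) → Γ) (hf : Measurable f)
    (θ σ : Fin d → ℝ) (hσ : ∀ i, 0 < σ i)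
    (ca : Γ) (pA pB : ℝ) (hpA : pA ∈ Set.Ioo (0 : ℝ) 1) (hpB : pB ∈ Set.Ioo (0 : ℝ) 1)
    (hA : pA ≤ ((gaussPi d 0 σ) {v | f (θ + v) = ca}).toReal)
    (hB : ∀ c, c ≠ ca → ((gaussPi d 0 σ) {v | f (θ + v) = c}).toReal ≤ pB)
    (δ : Fin d → ℝ)
    (hδ : Real.sqrt (∑ i, (δ i / σ i) ^ 2) < (PhiInv pA - PhiInv pB) / 2) :
    ∀ c, c ≠ ca → ((gaussPi d 0 σ) {v | f (θ + δ + v) = c}).toReal <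
      ((gaussPi d 0 σ) {v | f (θ + δ + v) = ca}).toReal := by
  intro c hc
  have hclass (c' : Γ) : MeasurableSet {v | f (θ + v) = c'} :=
    (hf.comp (measurable_const_add θ)) (measurableSet_singleton c')
  have hshift (c' : Γ) :
      gaussPi d 0 σ {v | f (θ + δ + v) = c'} = gaussPi d δ σ {v | f (θ + v) = c'} := by
    rw [← zero_add δ, ← gaussPi_map_add, Measure.map_apply (measurable_add_const δ) (hclass c'),
      zero_add]
    simp only [preimage_ofPred_eq, add_assoc, add_comm δ]
  simp only [← measureReal_def, hshift] at hA hB ⊢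
  calc _ ≤ Phi (PhiInv pB + √(∑ i, (δ i / σ i) ^ 2)) :=
        (gaussPi_shift_Phi_bounds hσ δ (hclass c) _).2 (by rw [Phi_PhiInv hpB]; exact hB c hc)
    _ < Phi (PhiInv pA - √(∑ i, (δ i / σ i) ^ 2)) := Phi_strictMono (by linarith)
    _ ≤ _ := (gaussPi_shift_Phi_bounds hσ δ (hclass ca) _).1 (by rwa [Phi_PhiInv hpA])

theorem noise_resilience {Γ : Type*} [Fintype Γ] [MeasurableSpace Γ] [MeasurableSingletonClass Γ]
    (hcard : 2 ≤ Fintype.card Γ)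
    (d : ℕ) (f : (Fin d → ℝ) → Γ) (hf : Measurable f)
    (θ σ : Fin d → ℝ) (hσ : ∀ i, 0 < σ i)
    (ca : Γ) (pA pB : ℝ) (hpA : pA ∈ Set.Ioo (0 : ℝ) 1) (hpB : pB ∈ Set.Ioo (0 : ℝ) 1)
    (hBA : pB ≤ pA)
    (hA : pA ≤ ((gaussPi d 0 σ) {v | f (θ + v) = ca}).toReal)
    (hB : ∀ c, c ≠ ca → ((gaussPi d 0 σ) {v | f (θ + v) = c}).toReal ≤ pB)
    (δ : Fin d → ℝ)
    (hδ : Real.sqrt (∑ i, (δ i / σ i) ^ 2) < (PhiInv pA - PhiInv pB) / 2) :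
    ∀ c, c ≠ ca → ((gaussPi d 0 σ) {v | f (θ + δ + v) = c}).toReal <
      ((gaussPi d 0 σ) {v | f (θ + δ + v) = ca}).toReal :=
  noise_resilience_general d f hf θ σ hσ ca pA pB hpA hpB hA hB δ hδ
end

section
/- Anisotropic Neyman–Pearson lower-bound lemma: Let X ~ N(x, Σ), Y ~ N(x+δ, Σ) with Σ = diag(σ²), λ = δ ⊘ σ^{∘2} ≠ 0, and let h : ℝᵈ → {0,1} be measurable. If S = {z : λᵀz ≤ β} and ℙ(h(X)=1) ≥ ℙ(X ∈ S), then ℙ(h(Y)=1) ≥ ℙ(Y ∈ S). -/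
open MeasureTheory ProbabilityTheory

/-
The likelihood ratio of `N(x + δ, diag σ²)` with respect to `N(x, diag σ²)` is
`z ↦ exp (λᵀz - λᵀ(x + δ / 2))`, an increasing function of the statistic `λᵀz`. So `S` is a
sublevel set `{dQ/dP ≤ t}` of the likelihood ratio, with `t` its value at `λᵀz = β`. Splitting `S`
and `A = {h = 1}` along their intersection, `P S ≤ P A` becomes `P (S \ A) ≤ P (A \ S)`, and then
`Q (S \ A) ≤ t · P (S \ A) ≤ t · P (A \ S) ≤ Q (A \ S)`.
-/

open scoped ENNReal NNReal

namespace MeasureTheory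

theorem lintegral_fin_pi_prod {n : ℕ} {E : Fin n → Type*} [∀ i, MeasurableSpace (E i)]
    (μ : ∀ i, Measure (E i)) [∀ i, SigmaFinite (μ i)]
    {f : ∀ i, E i → ℝ≥0∞} (hf : ∀ i, Measurable (f i)) :
    ∫⁻ x, ∏ i, f i (x i) ∂Measure.pi μ = ∏ i, ∫⁻ x, f i x ∂μ i := by
  induction n with
  | zero => simp
  | succ n ih =>
    rw [← ((measurePreserving_piFinSuccAbove μ 0).symm).lintegral_comp_emb
      (MeasurableEquiv.measurableEmbedding _)]
    simp_rw [MeasurableEquiv.piFinSuccAbove_symm_apply, Fin.insertNthEquiv,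
      Fin.prod_univ_succAbove _ 0, Equiv.coe_fn_mk, Fin.insertNth_apply_same,
      Fin.insertNth_apply_succAbove]
    have hrest : Measurable fun y : ∀ j : Fin n, E (Fin.succAbove 0 j) =>
        ∏ j, f (Fin.succAbove 0 j) (y j) :=
      Finset.measurable_prod _ fun j _ => (hf _).comp (measurable_pi_apply j)
    rw [lintegral_prod_mul (hf 0).aemeasurable hrest.aemeasurable, ih _ fun j => hf _]

theorem lintegral_pi_prod {ι : Type*} [Fintype ι] {E : ι → Type*} [∀ i, MeasurableSpace (E i)]
    (μ : ∀ i, Measure (E i)) [∀ i, SigmaFinite (μ i)]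
    {f : ∀ i, E i → ℝ≥0∞} (hf : ∀ i, Measurable (f i)) :
    ∫⁻ x, ∏ i, f i (x i) ∂Measure.pi μ = ∏ i, ∫⁻ x, f i x ∂μ i := by
  let e := (Fintype.equivFin ι).symm
  rw [← (measurePreserving_piCongrLeft μ e).lintegral_comp_emb
    (MeasurableEquiv.measurableEmbedding _)]
  have hreindex : ∀ a : ∀ j, E (e j),
      ∏ i, f i (MeasurableEquiv.piCongrLeft E e a i) = ∏ j, f (e j) (a j) := fun a =>
    (Fintype.prod_equiv e _ _ fun j => by
      rw [MeasurableEquiv.coe_piCongrLeft, Equiv.piCongrLeft_apply_apply]).symm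
  simp_rw [hreindex]
  rw [lintegral_fin_pi_prod _ fun j => hf (e j)]
  exact Fintype.prod_equiv e _ _ fun _ => rfl

theorem Measure.pi_withDensity_s8 {ι : Type*} [Fintype ι] {E : ι → Type*}
    [∀ i, MeasurableSpace (E i)] (μ : ∀ i, Measure (E i)) [∀ i, SigmaFinite (μ i)]
    {f : ∀ i, E i → ℝ≥0∞} [∀ i, SigmaFinite ((μ i).withDensity (f i))]
    (hf : ∀ i, Measurable (f i)) :
    Measure.pi (fun i => (μ i).withDensity (f i))
      = (Measure.pi μ).withDensity fun x => ∏ i, f i (x i) := by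
  refine Measure.pi_eq fun s hs => ?_
  rw [withDensity_apply _ (MeasurableSet.univ_pi hs), Measure.restrict_pi_pi μ,
    lintegral_pi_prod _ hf]
  simp_rw [withDensity_apply _ (hs _)]

section NeymanPearson

variable {α : Type*} [MeasurableSpace α] {P : Measure α} [IsFiniteMeasure P] {g : α → ℝ≥0∞}
  {S A : Set α}

theorem withDensity_apply_le_of_threshold (hS : MeasurableSet S) (hA : MeasurableSet A)
    (t : ℝ≥0∞) (hg_le : ∀ z ∈ S, g z ≤ t) (hle_g : ∀ z ∉ S, t ≤ g z) (hSA : P S ≤ P A) :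
    P.withDensity g S ≤ P.withDensity g A := by
  have hP_diff : P (S \ A) ≤ P (A \ S) := by
    rw [← measure_inter_add_sdiff S hA, ← measure_inter_add_sdiff A hS, Set.inter_comm] at hSA
    exact (ENNReal.add_le_add_iff_left (measure_ne_top P _)).mp hSA
  have hQ_diff : P.withDensity g (S \ A) ≤ P.withDensity g (A \ S) := by
    rw [withDensity_apply _ (hS.diff hA), withDensity_apply _ (hA.diff hS)]
    calc ∫⁻ z in S \ A, g z ∂P ≤ ∫⁻ _ in S \ A, t ∂P :=
          setLIntegral_mono' (hS.diff hA) fun z hz => hg_le z hz.1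
      _ = t * P (S \ A) := setLIntegral_const _ _
      _ ≤ t * P (A \ S) := by gcongr
      _ = ∫⁻ _ in A \ S, t ∂P := (setLIntegral_const _ _).symm
      _ ≤ ∫⁻ z in A \ S, g z ∂P := setLIntegral_mono' (hA.diff hS) fun z hz => hle_g z hz.2
  rw [← measure_inter_add_sdiff S hA, ← measure_inter_add_sdiff A hS, Set.inter_comm]
  gcongr

theorem withDensity_comp_apply_le_of_monotone {L : α → ℝ} (hL : Measurable L) {φ : ℝ → ℝ≥0∞}
    (hφ : Monotone φ) (hA : MeasurableSet A) (β : ℝ) (hSA : P {z | L z ≤ β} ≤ P A) :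
    P.withDensity (φ ∘ L) {z | L z ≤ β} ≤ P.withDensity (φ ∘ L) A :=
  withDensity_apply_le_of_threshold (measurableSet_le hL measurable_const) hA (φ β)
    (fun _ hz => hφ hz) (fun _ hz => hφ (le_of_not_ge hz)) hSA

end NeymanPearson

end MeasureTheory

namespace ProbabilityTheory

theorem gaussianReal_add_eq_withDensity (m d : ℝ) {v : ℝ≥0} (hv : v ≠ 0) :
    gaussianReal (m + d) v
      = (gaussianReal m v).withDensity
          fun t => ENNReal.ofReal (Real.exp (d / v * (t - m - d / 2))) := by
  have hpdf : ∀ t, gaussianPDFReal (m + d) v t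
      = gaussianPDFReal m v t * Real.exp (d / v * (t - m - d / 2)) := fun t => by
    simp only [gaussianPDFReal]
    rw [mul_assoc _ (Real.exp _), ← Real.exp_add]
    congr 2
    field_simp
    ring
  rw [gaussianReal_of_var_ne_zero _ hv, gaussianReal_of_var_ne_zero _ hv,
    ← withDensity_mul _ (measurable_gaussianPDF _ _) (by fun_prop)]
  congr 1
  funext t
  rw [Pi.mul_apply, gaussianPDF, gaussianPDF, hpdf,
    ENNReal.ofReal_mul (gaussianPDFReal_nonneg _ _ _)]

end ProbabilityTheory

theorem gaussPi_add_eq_withDensity (d : ℕ) (x δ σ : Fin d → ℝ) (hσ : ∀ i, σ i ≠ 0) :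
    gaussPi d (x + δ) σ = (gaussPi d x σ).withDensity
      fun z => ENNReal.ofReal (Real.exp (∑ i, δ i / σ i ^ 2 * (z i - x i - δ i / 2))) := by
  have hvar : ∀ i, ((σ i ^ 2).toNNReal : ℝ) = σ i ^ 2 := fun i =>
    Real.coe_toNNReal _ (sq_nonneg _)
  have hvar_ne : ∀ i, (σ i ^ 2).toNNReal ≠ 0 := fun i => by
    simpa [← NNReal.coe_ne_zero, hvar] using hσ i
  simp only [gaussPi, Pi.add_apply, gaussianReal_add_eq_withDensity _ _ (hvar_ne _)]
  rw [Measure.pi_withDensity_s8 _ fun i => by fun_prop]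
  simp_rw [hvar, Real.exp_sum, ENNReal.ofReal_prod_of_nonneg fun i _ => Real.exp_nonneg _]

instance (d : ℕ) (m s : Fin d → ℝ) : IsProbabilityMeasure (gaussPi d m s) := by
  unfold gaussPi; infer_instance

theorem neyman_pearson_lower_general (d : ℕ) (x δ σ : Fin d → ℝ) (hσ : ∀ i, 0 < σ i)
    (lam : Fin d → ℝ) (hlam : ∀ i, lam i = δ i / σ i ^ 2)
    (β : ℝ) (h : (Fin d → ℝ) → Bool) (hh : Measurable h)
    (S : Set (Fin d → ℝ)) (hS : S = {z | ∑ i, lam i * z i ≤ β})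
    (hlow : (gaussPi d x σ) S ≤ (gaussPi d x σ) {z | h z = true}) :
    (gaussPi d (x + δ) σ) S ≤ (gaussPi d (x + δ) σ) {z | h z = true} := by
  subst hS
  set c := ∑ i, lam i * (x i + δ i / 2)
  have hdensity :
      (fun z : Fin d → ℝ => ENNReal.ofReal (Real.exp (∑ i, δ i / σ i ^ 2 * (z i - x i - δ i / 2))))
        = (fun u => ENNReal.ofReal (Real.exp (u - c))) ∘ fun z => ∑ i, lam i * z i := by
    funext z
    simp only [Function.comp_apply, c, ← hlam, ← Finset.sum_sub_distrib]
    congr 2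
    exact Finset.sum_congr rfl fun i _ => by ring
  rw [gaussPi_add_eq_withDensity d x δ σ fun i => (hσ i).ne', hdensity]
  exact withDensity_comp_apply_le_of_monotone (by fun_prop)
    (fun _ _ huv => ENNReal.ofReal_le_ofReal (Real.exp_le_exp.mpr (sub_le_sub_right huv c)))
    (hh (measurableSet_singleton true)) β hlow

theorem neyman_pearson_lower (d : ℕ) (x δ σ : Fin d → ℝ) (hσ : ∀ i, 0 < σ i) (hδ : δ ≠ 0)
    (lam : Fin d → ℝ) (hlam : ∀ i, lam i = δ i / σ i ^ 2)
    (β : ℝ) (h : (Fin d → ℝ) → Bool) (hh : Measurable h)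
    (S : Set (Fin d → ℝ)) (hS : S = {z | ∑ i, lam i * z i ≤ β})
    (hlow : (gaussPi d x σ) S ≤ (gaussPi d x σ) {z | h z = true}) :
    (gaussPi d (x + δ) σ) S ≤ (gaussPi d (x + δ) σ) {z | h z = true} :=
  neyman_pearson_lower_general d x δ σ hσ lam hlam β h hh S hS hlow
end
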